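/- For every n ≥ 1, let T_n be the Kripke tree over AP = {p} defined as follows: T_n has a main infinite path π from the root on which p never holds; the node π(n+1) has π(n+2) as its unique child; and for every i ∈ ℕ with i ≠ n+1, π(i) has exactly one additional child w_i not on π, and the subtree rooted at w_i is a single infinite path whose labels form the word {p}∅^ω. Then for every n ≥ 1, every position 0 ≤ i ≤ n, and every CCTL* path formula ψ with |ψ| ≤ n − i: (T_{n+1}, π_{n+1}, i) ⊨ ψ if and only if (T_{n+1}, π_{n+1}, i+1) ⊨ ψ, where π_{n+1} is the main path of T_{n+1}. -/

import Mathlib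

mutual
/-- State formulas of Counting-CTL* (CCTL*). -/
inductive SForm (AP : Type) : Type where
  | top : SForm AP
  | atom : AP → SForm AP
  | not : SForm AP → SForm AP
  | and : SForm AP → SForm AP → SForm AP
  | ex : PForm AP → SForm AP
  | cnt : ℕ → SForm AP → SForm AP
/-- Path formulas of Counting-CTL* (CCTL*). -/
inductive PForm (AP : Type) : Type where
  | state : SForm AP → PForm AP
  | not : PForm AP → PForm AP
  | and : PForm AP → PForm AP → PForm AP
  | next : PForm AP → PForm AP
  | until_ : PForm AP → PForm AP → PForm AP
end

/-- `T` is a tree: nonempty and prefix-closed. -/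
def IsTree {D : Type} (T : Set (List D)) : Prop :=
  [] ∈ T ∧ ∀ (w : List D) (d : D), w ++ [d] ∈ T → w ∈ T

/-- Every node of `T` has a child. -/
def NonBlocking {D : Type} (T : Set (List D)) : Prop :=
  ∀ w ∈ T, ∃ d : D, w ++ [d] ∈ T

/-- `π` is an infinite path of `T` starting at node `w`. -/
def IsPathFrom {D : Type} (T : Set (List D)) (π : ℕ → List D) (w : List D) : Prop :=
  π 0 = w ∧ ∀ i, π i ∈ T ∧ ∃ d : D, π (i + 1) = π i ++ [d]

mutual
/-- Satisfaction of a CCTL* state formula at a node of the Kripke tree `(T, Lab)`. -/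
def SatS {D AP : Type} (T : Set (List D)) (Lab : List D → Set AP) :
    SForm AP → List D → Prop
  | .top, _ => True
  | .atom p, w => p ∈ Lab w
  | .not φ, w => ¬ SatS T Lab φ w
  | .and φ ψ, w => SatS T Lab φ w ∧ SatS T Lab ψ w
  | .ex ψ, w => ∃ π : ℕ → List D, IsPathFrom T π w ∧ SatP T Lab ψ π 0
  | .cnt k φ, w => ∃ s : Finset D, k ≤ s.card ∧
      ∀ d ∈ s, w ++ [d] ∈ T ∧ SatS T Lab φ (w ++ [d])
/-- Satisfaction of a CCTL* path formula at position `i` of the infinite path `π`. -/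
def SatP {D AP : Type} (T : Set (List D)) (Lab : List D → Set AP) :
    PForm AP → (ℕ → List D) → ℕ → Prop
  | .state φ, π, i => SatS T Lab φ (π i)
  | .not ψ, π, i => ¬ SatP T Lab ψ π i
  | .and ψ χ, π, i => SatP T Lab ψ π i ∧ SatP T Lab χ π i
  | .next ψ, π, i => SatP T Lab ψ π (i + 1)
  | .until_ ψ χ, π, i =>
      ∃ j, i ≤ j ∧ SatP T Lab χ π j ∧ ∀ k, i ≤ k → k < j → SatP T Lab ψ π k
end

mutual
/-- Length (number of symbols) of a CCTL* state formula. -/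
def sizeS {AP : Type} : SForm AP → ℕ
  | .top => 1
  | .atom _ => 1
  | .not φ => 1 + sizeS φ
  | .and φ ψ => 1 + sizeS φ + sizeS ψ
  | .ex ψ => 1 + sizeP ψ
  | .cnt _ φ => 1 + sizeS φ
/-- Length (number of symbols) of a CCTL* path formula. -/
def sizeP {AP : Type} : PForm AP → ℕ
  | .state φ => sizeS φ
  | .not ψ => 1 + sizeP ψ
  | .and ψ χ => 1 + sizeP ψ + sizeP χ
  | .next ψ => 1 + sizeP ψ
  | .until_ ψ χ => 1 + sizeP ψ + sizeP χ
end

/-- The `j`-th node of the main path: `0^j`. -/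
def mainNode (j : ℕ) : List ℕ := List.replicate j 0

/-- The Kripke tree `T_m` (over directions `ℕ`): its nodes are the main path
`π(j) = 0^j`, and for each `i ≠ m + 1` a side path `0^i · 1 · 0^k` hanging off
`π(i)` (so `π(m+1)` has a unique child, and every other `π(i)` has exactly one
additional child `w_i = 0^i · 1`). -/
def Ttree (m : ℕ) : Set (List ℕ) :=
  {w | (∃ j, w = mainNode j) ∨
       ∃ i k, i ≠ m + 1 ∧ w = mainNode i ++ 1 :: mainNode k}

/-- The labelling of `T_m`: the proposition `p` holds exactly at the first node
`0^i · 1` of a side path, so each side path carries the word `{p}∅^ω` and `p`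
never holds on the main path. -/
def KLab : List ℕ → Set Unit := fun w => {_u | ∃ i, w = mainNode i ++ [1]}

/-!
In `T_m` the main node `π(c)` and its successor `π(c+1)` satisfy the same state formulas of size
at most `m - 1 - c`, by induction on the formula. The side branches are all copies of one
another, so for `E ψ` it only matters where a path leaves the main path. A path from `π(c)` that
stays on the main path, or leaves it at some `π(t)` beyond the `X`-depth of `ψ`, is matched by
its own tail from `π(c+1)`: the shift is invisible to `ψ` because an until only needs its
arguments to be shift-invariant at the current position. A path leaving at a nearer `π(t)` is
matched by the path from `π(c+1)` leaving at `π(t+1)`; position by position the two visit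
`π(j)` and `π(j+1)` with `j - c` at most the `X`-depth, or equivalent side nodes, and the size of
`ψ` pays for that depth.
-/

def nextDepthP {AP : Type} : PForm AP → ℕ
  | .state _ => 0
  | .not ψ => nextDepthP ψ
  | .and ψ χ => max (nextDepthP ψ) (nextDepthP χ)
  | .next ψ => nextDepthP ψ + 1
  | .until_ ψ χ => max (nextDepthP ψ) (nextDepthP χ)

/-- The largest size of a state formula occurring directly below the path connectives of `ψ`. -/
def stateSizeP {AP : Type} : PForm AP → ℕ
  | .state φ => sizeS φ
  | .not ψ => stateSizeP ψ
  | .and ψ χ => max (stateSizeP ψ) (stateSizeP χ)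
  | .next ψ => stateSizeP ψ
  | .until_ ψ χ => max (stateSizeP ψ) (stateSizeP χ)

theorem stateSizeP_add_nextDepthP_le {AP : Type} :
    ∀ ψ : PForm AP, stateSizeP ψ + nextDepthP ψ ≤ sizeP ψ
  | .state _ => by simp [stateSizeP, nextDepthP, sizeP]
  | .not ψ | .next ψ => by
    have := stateSizeP_add_nextDepthP_le ψ
    simp only [stateSizeP, nextDepthP, sizeP]
    omega
  | .and ψ χ | .until_ ψ χ => by
    have := stateSizeP_add_nextDepthP_le ψ
    have := stateSizeP_add_nextDepthP_le χ
    simp only [stateSizeP, nextDepthP, sizeP]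
    omega

section Semantics

variable {D AP : Type} {T : Set (List D)} {L : List D → Set AP}

theorem IsPathFrom.comp_add {π : ℕ → List D} {w : List D} (h : IsPathFrom T π w) (k : ℕ) :
    IsPathFrom T (fun j => π (j + k)) (π k) :=
  ⟨by simp, fun i => by simpa [Nat.add_right_comm i 1 k] using h.2 (i + k)⟩

theorem IsPathFrom.prefix {π : ℕ → List D} {w : List D} (h : IsPathFrom T π w) :
    ∀ j, w <+: π j
  | 0 => h.1 ▸ List.prefix_refl w
  | j + 1 => by
    obtain ⟨d, hd⟩ := (h.2 j).2
    exact hd ▸ (h.prefix j).trans (List.prefix_append _ _)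

theorem satP_comp_add_iff (π : ℕ → List D) (k : ℕ) :
    ∀ (ψ : PForm AP) (i : ℕ), SatP T L ψ (fun j => π (j + k)) i ↔ SatP T L ψ π (i + k)
  | .state φ, i => Iff.rfl
  | .not ψ, i => not_congr (satP_comp_add_iff π k ψ i)
  | .and ψ χ, i => and_congr (satP_comp_add_iff π k ψ i) (satP_comp_add_iff π k χ i)
  | .next ψ, i => by
    simp only [SatP]
    rw [satP_comp_add_iff π k ψ, Nat.add_right_comm]
  | .until_ ψ χ, i => by
    simp only [SatP, satP_comp_add_iff π k ψ, satP_comp_add_iff π k χ]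
    constructor
    · rintro ⟨j, hij, hχ, hψ⟩
      refine ⟨j + k, by omega, hχ, fun l hil hlj => ?_⟩
      simpa [Nat.sub_add_cancel (show k ≤ l by omega)] using hψ (l - k) (by omega) (by omega)
    · rintro ⟨j, hij, hχ, hψ⟩
      refine ⟨j - k, by omega, by rwa [Nat.sub_add_cancel (by omega)], fun l hil hlj => ?_⟩
      exact hψ (l + k) (by omega) (by omega)

theorem satP_congr_of_satS_iff {π π' : ℕ → List D} :
    ∀ ψ : PForm AP, (∀ j, ∀ φ, sizeS φ ≤ stateSizeP ψ →
      (SatS T L φ (π j) ↔ SatS T L φ (π' j))) →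
      ∀ i, SatP T L ψ π i ↔ SatP T L ψ π' i
  | .state φ, h, i => h i φ le_rfl
  | .not ψ, h, i => not_congr (satP_congr_of_satS_iff ψ h i)
  | .and ψ χ, h, i =>
    and_congr (satP_congr_of_satS_iff ψ (fun j φ hφ => h j φ (le_max_of_le_left hφ)) i)
      (satP_congr_of_satS_iff χ (fun j φ hφ => h j φ (le_max_of_le_right hφ)) i)
  | .next ψ, h, i => satP_congr_of_satS_iff ψ h (i + 1)
  | .until_ ψ χ, h, i => by
    have hψ := satP_congr_of_satS_iff ψ (fun j φ hφ => h j φ (le_max_of_le_left hφ))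
    have hχ := satP_congr_of_satS_iff χ (fun j φ hφ => h j φ (le_max_of_le_right hφ))
    simp only [SatP, hψ, hχ]

theorem satP_until_iff_succ {ψ χ : PForm AP} {π : ℕ → List D} {i : ℕ}
    (hψ : SatP T L ψ π i ↔ SatP T L ψ π (i + 1))
    (hχ : SatP T L χ π i ↔ SatP T L χ π (i + 1)) :
    SatP T L (.until_ ψ χ) π i ↔ SatP T L (.until_ ψ χ) π (i + 1) := by
  simp only [SatP]
  constructor
  · rintro ⟨j, hij, hχj, hψj⟩
    rcases hij.eq_or_lt with rfl | hlt
    · exact ⟨i + 1, le_rfl, hχ.1 hχj, fun l hl hlj => absurd hlj (by omega)⟩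
    · exact ⟨j, hlt, hχj, fun l hl hlj => hψj l (by omega) hlj⟩
  · rintro ⟨j, hij, hχj, hψj⟩
    rcases hij.eq_or_lt with rfl | hlt
    · exact ⟨i, le_rfl, hχ.2 hχj, fun l hl hlj => absurd hlj (by omega)⟩
    · refine ⟨j, by omega, hχj, fun l hl hlj => ?_⟩
      rcases hl.eq_or_lt with rfl | hl
      · exact hψ.2 (hψj (i + 1) le_rfl hlt)
      · exact hψj l hl hlj

theorem satP_iff_succ_of_satS_iff {π : ℕ → List D} :
    ∀ (ψ : PForm AP) (i : ℕ), (∀ k ≤ nextDepthP ψ, ∀ φ, sizeS φ ≤ stateSizeP ψ →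
      (SatS T L φ (π (i + k)) ↔ SatS T L φ (π (i + k + 1)))) →
      (SatP T L ψ π i ↔ SatP T L ψ π (i + 1))
  | .state φ, i, h => h 0 le_rfl φ le_rfl
  | .not ψ, i, h => not_congr (satP_iff_succ_of_satS_iff ψ i h)
  | .and ψ χ, i, h =>
    and_congr
      (satP_iff_succ_of_satS_iff ψ i fun k hk φ hφ =>
        h k (le_max_of_le_left hk) φ (le_max_of_le_left hφ))
      (satP_iff_succ_of_satS_iff χ i fun k hk φ hφ =>
        h k (le_max_of_le_right hk) φ (le_max_of_le_right hφ))
  | .next ψ, i, h => satP_iff_succ_of_satS_iff ψ (i + 1) fun k hk φ hφ => by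
    simpa only [Nat.add_assoc, Nat.add_comm 1 k] using
      h (k + 1) (by simp [nextDepthP]; omega) φ hφ
  | .until_ ψ χ, i, h =>
    satP_until_iff_succ
      (satP_iff_succ_of_satS_iff ψ i fun k hk φ hφ =>
        h k (le_max_of_le_left hk) φ (le_max_of_le_left hφ))
      (satP_iff_succ_of_satS_iff χ i fun k hk φ hφ =>
        h k (le_max_of_le_right hk) φ (le_max_of_le_right hφ))

theorem satS_cnt_congr {φ : SForm AP} {w w' : List D} (K : ℕ)
    (h : ∀ d, w ++ [d] ∈ T ∧ SatS T L φ (w ++ [d]) ↔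
      w' ++ [d] ∈ T ∧ SatS T L φ (w' ++ [d])) :
    SatS T L (.cnt K φ) w ↔ SatS T L (.cnt K φ) w' := by
  simp only [SatS]
  exact exists_congr fun s => and_congr_right' (forall₂_congr fun d _ => h d)

theorem exists_eq_append_of_isPathFrom {π : ℕ → List D} {w u : List D}
    (h : IsPathFrom T π (w ++ u)) : ∃ ρ : ℕ → List D, π = fun j => w ++ ρ j := by
  choose ρ hρ using fun j => (List.prefix_append w u).trans (h.prefix j)
  exact ⟨ρ, funext fun j => (hρ j).symm⟩

theorem IsPathFrom.append_of_subtree {w w' u : List D} {ρ : ℕ → List D}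
    (hT : ∀ v, w ++ v ∈ T → w' ++ v ∈ T) (h : IsPathFrom T (fun j => w ++ ρ j) (w ++ u)) :
    IsPathFrom T (fun j => w' ++ ρ j) (w' ++ u) := by
  refine ⟨by simp [List.append_cancel_left h.1], fun i => ⟨hT _ (h.2 i).1, ?_⟩⟩
  obtain ⟨d, hd⟩ := (h.2 i).2
  exact ⟨d, by simp [List.append_cancel_left (hd.trans (List.append_assoc _ _ _))]⟩

variable {w w' : List D}

mutual
theorem satS_append_iff_of_subtree (hT : ∀ u, w ++ u ∈ T ↔ w' ++ u ∈ T)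
    (hL : ∀ u, L (w ++ u) = L (w' ++ u)) : ∀ (φ : SForm AP) (u : List D),
    SatS T L φ (w ++ u) ↔ SatS T L φ (w' ++ u)
  | .top, _ => Iff.rfl
  | .atom p, u => by simp only [SatS, hL u]
  | .not φ, u => not_congr (satS_append_iff_of_subtree hT hL φ u)
  | .and φ χ, u =>
    and_congr (satS_append_iff_of_subtree hT hL φ u) (satS_append_iff_of_subtree hT hL χ u)
  | .ex ψ, u => by
    constructor
    · rintro ⟨π, hπ, hs⟩
      obtain ⟨ρ, rfl⟩ := exists_eq_append_of_isPathFrom hπ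
      exact ⟨_, hπ.append_of_subtree (fun v => (hT v).1),
        (satP_append_iff_of_subtree hT hL ψ ρ 0).1 hs⟩
    · rintro ⟨π, hπ, hs⟩
      obtain ⟨ρ, rfl⟩ := exists_eq_append_of_isPathFrom hπ
      exact ⟨_, hπ.append_of_subtree (fun v => (hT v).2),
        (satP_append_iff_of_subtree hT hL ψ ρ 0).2 hs⟩
  | .cnt K φ, u => satS_cnt_congr K fun d => by
    simp only [List.append_assoc, hT, satS_append_iff_of_subtree hT hL φ (u ++ [d])]

theorem satP_append_iff_of_subtree (hT : ∀ u, w ++ u ∈ T ↔ w' ++ u ∈ T)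
    (hL : ∀ u, L (w ++ u) = L (w' ++ u)) : ∀ (ψ : PForm AP) (ρ : ℕ → List D) (i : ℕ),
    SatP T L ψ (fun j => w ++ ρ j) i ↔ SatP T L ψ (fun j => w' ++ ρ j) i
  | .state φ, ρ, i => satS_append_iff_of_subtree hT hL φ (ρ i)
  | .not ψ, ρ, i => not_congr (satP_append_iff_of_subtree hT hL ψ ρ i)
  | .and ψ χ, ρ, i =>
    and_congr (satP_append_iff_of_subtree hT hL ψ ρ i) (satP_append_iff_of_subtree hT hL χ ρ i)
  | .next ψ, ρ, i => satP_append_iff_of_subtree hT hL ψ ρ (i + 1)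
  | .until_ ψ χ, ρ, i => by
    simp only [SatP, satP_append_iff_of_subtree hT hL ψ ρ, satP_append_iff_of_subtree hT hL χ ρ]
end

end Semantics

def sideNode (a k : ℕ) : List ℕ := mainNode a ++ 1 :: mainNode k

def branchPath (t : ℕ) (j : ℕ) : List ℕ :=
  if j ≤ t then mainNode j else sideNode t (j - t - 1)

section Ttree

variable {m : ℕ}

theorem mainNode_succ (j : ℕ) : mainNode (j + 1) = mainNode j ++ [0] :=
  List.replicate_succ' ..

theorem sideNode_succ (a k : ℕ) : sideNode a (k + 1) = sideNode a k ++ [0] := by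
  simp [sideNode, mainNode_succ]

theorem eq_zero_of_mem_mainNode {x j : ℕ} (h : x ∈ mainNode j) : x = 0 :=
  List.eq_of_mem_replicate h

theorem mainNode_ne_append_cons_one (j a : ℕ) (u : List ℕ) :
    mainNode j ≠ mainNode a ++ 1 :: u :=
  fun h => one_ne_zero (eq_zero_of_mem_mainNode (h ▸ List.mem_append_right _ List.mem_cons_self))

theorem mainNode_append_cons_one_inj {a b : ℕ} {u v : List ℕ}
    (h : mainNode a ++ 1 :: u = mainNode b ++ 1 :: v) : a = b ∧ u = v := by
  induction a generalizing b with
  | zero => cases b <;> simp_all [mainNode, List.replicate_succ]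
  | succ a ih =>
    cases b with
    | zero => simp [mainNode, List.replicate_succ] at h
    | succ b =>
      simp only [mainNode, List.replicate_succ, List.cons_append, List.cons.injEq] at h
      simpa using ih h.2

theorem mainNode_mem_Ttree (j : ℕ) : mainNode j ∈ Ttree m := Or.inl ⟨j, rfl⟩

theorem le_one_of_mem_Ttree {w : List ℕ} {x : ℕ} (hw : w ∈ Ttree m) (hx : x ∈ w) :
    x ≤ 1 := by
  rcases hw with ⟨j, rfl⟩ | ⟨i, k, -, rfl⟩ <;> simp [mainNode] at hx <;> omega

theorem append_cons_one_mem_Ttree_iff {a : ℕ} {u : List ℕ} :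
    mainNode a ++ 1 :: u ∈ Ttree m ↔ a ≠ m + 1 ∧ ∃ k, u = mainNode k := by
  constructor
  · rintro (⟨j, hj⟩ | ⟨i, k, hi, h⟩)
    · exact absurd hj.symm (mainNode_ne_append_cons_one _ _ _)
    · obtain ⟨rfl, rfl⟩ := mainNode_append_cons_one_inj h
      exact ⟨hi, k, rfl⟩
  · rintro ⟨ha, k, rfl⟩
    exact Or.inr ⟨a, k, ha, rfl⟩

theorem sideNode_mem_Ttree {a : ℕ} (ha : a ≠ m + 1) (k : ℕ) : sideNode a k ∈ Ttree m :=
  append_cons_one_mem_Ttree_iff.2 ⟨ha, k, rfl⟩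

theorem mainNode_append_mem_Ttree_iff {c d : ℕ} :
    mainNode c ++ [d] ∈ Ttree m ↔ d = 0 ∨ d = 1 ∧ c ≠ m + 1 := by
  rcases d with _ | _ | d
  · simpa [← mainNode_succ] using mainNode_mem_Ttree (c + 1)
  · simpa using (append_cons_one_mem_Ttree_iff (u := [])).trans (and_iff_left ⟨0, rfl⟩)
  · refine iff_of_false (fun h => ?_) (by omega)
    have := le_one_of_mem_Ttree h (List.mem_concat_self (a := d + 2))
    omega

theorem sideNode_append_mem_Ttree_iff {a k d : ℕ} :
    sideNode a k ++ [d] ∈ Ttree m ↔ d = 0 ∧ a ≠ m + 1 := by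
  have : (∃ k', mainNode k ++ [d] = mainNode k') ↔ d = 0 :=
    ⟨fun ⟨_, h⟩ => eq_zero_of_mem_mainNode (h ▸ List.mem_concat_self ..),
      fun h => ⟨k + 1, h ▸ (mainNode_succ k).symm⟩⟩
  simp only [sideNode, List.append_assoc, List.cons_append, append_cons_one_mem_Ttree_iff, this,
    and_comm]

theorem KLab_mainNode (c : ℕ) : KLab (mainNode c) = ∅ :=
  Set.eq_empty_of_forall_notMem fun _ ⟨i, h⟩ => mainNode_ne_append_cons_one c i [] h

theorem KLab_append_cons_one (a : ℕ) (u : List ℕ) :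
    KLab (mainNode a ++ 1 :: u) = {_x | u = []} := by
  ext
  exact ⟨fun ⟨i, h⟩ => (mainNode_append_cons_one_inj h).2, fun h => ⟨a, h ▸ rfl⟩⟩

theorem satS_sideNode_iff {a b : ℕ} (ha : a ≠ m + 1) (hb : b ≠ m + 1) (φ : SForm Unit)
    (k : ℕ) :
    SatS (Ttree m) KLab φ (sideNode a k) ↔ SatS (Ttree m) KLab φ (sideNode b k) := by
  have h := satS_append_iff_of_subtree (T := Ttree m) (L := KLab)
    (w := mainNode a ++ [1]) (w' := mainNode b ++ [1])
    (fun u => by simp [append_cons_one_mem_Ttree_iff, ha, hb])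
    (fun u => by simp [KLab_append_cons_one]) φ (mainNode k)
  rwa [List.append_assoc, List.append_assoc] at h

theorem branchPath_of_le {t j : ℕ} (h : j ≤ t) : branchPath t j = mainNode j := if_pos h

theorem branchPath_of_lt {t j : ℕ} (h : t < j) : branchPath t j = sideNode t (j - t - 1) :=
  if_neg (Nat.not_le.2 h)

theorem isPathFrom_mainNode : IsPathFrom (Ttree m) mainNode [] :=
  ⟨rfl, fun i => ⟨mainNode_mem_Ttree i, 0, mainNode_succ i⟩⟩

theorem isPathFrom_branchPath {t : ℕ} (ht : t ≠ m + 1) :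
    IsPathFrom (Ttree m) (branchPath t) [] := by
  refine ⟨(branchPath_of_le t.zero_le).trans rfl, fun j => ⟨?_, ?_⟩⟩
  · rcases le_or_gt j t with hj | hj
    · exact branchPath_of_le hj ▸ mainNode_mem_Ttree j
    · exact branchPath_of_lt hj ▸ sideNode_mem_Ttree ht _
  · rcases lt_trichotomy j t with hj | rfl | hj
    · exact ⟨0, by rw [branchPath_of_le hj, branchPath_of_le hj.le, mainNode_succ]⟩
    · refine ⟨1, ?_⟩
      rw [branchPath_of_lt (Nat.lt_succ_self j), branchPath_of_le le_rfl]
      simp [sideNode, mainNode]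
    · refine ⟨0, ?_⟩
      rw [branchPath_of_lt hj, branchPath_of_lt (by omega), ← sideNode_succ]
      congr 1
      omega

theorem IsPathFrom.eq_sideNode {π : ℕ → List ℕ} {a k : ℕ}
    (h : IsPathFrom (Ttree m) π (sideNode a k)) : ∀ j, π j = sideNode a (k + j)
  | 0 => h.1
  | j + 1 => by
    obtain ⟨d, hd⟩ := (h.2 j).2
    rw [h.eq_sideNode j] at hd
    obtain ⟨rfl, -⟩ := sideNode_append_mem_Ttree_iff.1 (hd ▸ (h.2 (j + 1)).1)
    rw [hd, ← sideNode_succ, Nat.add_assoc]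

theorem IsPathFrom.mainNode_cases {π : ℕ → List ℕ} {c : ℕ}
    (h : IsPathFrom (Ttree m) π (mainNode c)) :
    π = (fun j => mainNode (j + c)) ∨
      ∃ t, c ≤ t ∧ t ≠ m + 1 ∧ π = fun j => branchPath t (j + c) := by
  by_cases hall : ∀ j, π j = mainNode (j + c)
  · exact Or.inl (funext hall)
  right
  simp only [not_forall] at hall
  classical
  obtain ⟨j₁, hj₁⟩ : ∃ j₁, Nat.find hall = j₁ + 1 :=
    Nat.exists_eq_succ_of_ne_zero fun h0 => Nat.find_spec hall (by simpa [h0] using h.1)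
  have hmain : ∀ j ≤ j₁, π j = mainNode (j + c) := fun j hj =>
    not_not.1 (Nat.find_min hall (by omega))
  obtain ⟨d, hd⟩ := (h.2 j₁).2
  rw [hmain j₁ le_rfl] at hd
  obtain ⟨rfl, ht⟩ : d = 1 ∧ j₁ + c ≠ m + 1 := by
    refine (mainNode_append_mem_Ttree_iff.1 (hd ▸ (h.2 (j₁ + 1)).1)).resolve_left ?_
    rintro rfl
    exact hj₁ ▸ Nat.find_spec hall <| hd.trans (by rw [← mainNode_succ, Nat.add_right_comm])
  have hside : π (j₁ + 1) = sideNode (j₁ + c) 0 := hd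
  refine ⟨j₁ + c, by omega, ht, funext fun j => ?_⟩
  rcases le_or_gt j j₁ with hj | hj
  · rw [hmain j hj, branchPath_of_le (by omega)]
  · have := (hside ▸ h.comp_add (j₁ + 1)).eq_sideNode (j - (j₁ + 1))
    simp only [Nat.sub_add_cancel hj, Nat.zero_add] at this
    rw [this, branchPath_of_lt (by omega)]
    congr 1
    omega

theorem satS_ex_mainNode_iff {L : List ℕ → Set Unit} {ψ : PForm Unit} {c : ℕ} :
    SatS (Ttree m) L (.ex ψ) (mainNode c) ↔
      SatP (Ttree m) L ψ mainNode c ∨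
        ∃ t, c ≤ t ∧ t ≠ m + 1 ∧ SatP (Ttree m) L ψ (branchPath t) c := by
  have shift := fun π => (satP_comp_add_iff (T := Ttree m) (L := L) π c ψ 0).trans
    (by rw [Nat.zero_add])
  simp only [SatS]
  constructor
  · rintro ⟨π, hπ, hs⟩
    rcases hπ.mainNode_cases with rfl | ⟨t, hct, ht, rfl⟩
    · exact Or.inl ((shift _).1 hs)
    · exact Or.inr ⟨t, hct, ht, (shift _).1 hs⟩
  · rintro (hs | ⟨t, hct, ht, hs⟩)
    · exact ⟨_, isPathFrom_mainNode.comp_add c, (shift _).2 hs⟩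
    · exact ⟨_, branchPath_of_le hct ▸ (isPathFrom_branchPath ht).comp_add c, (shift _).2 hs⟩

theorem satP_branchPath_iff_succ {ψ : PForm Unit} {c t : ℕ} (ht : t < m)
    (hmain : ∀ j, c ≤ j → j ≤ t → ∀ φ, sizeS φ ≤ stateSizeP ψ →
      (SatS (Ttree m) KLab φ (mainNode j) ↔ SatS (Ttree m) KLab φ (mainNode (j + 1)))) :
    SatP (Ttree m) KLab ψ (branchPath t) c ↔
      SatP (Ttree m) KLab ψ (branchPath (t + 1)) (c + 1) := by
  have h₁ := satP_comp_add_iff (T := Ttree m) (L := KLab) (branchPath t) c ψ 0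
  have h₂ := satP_comp_add_iff (T := Ttree m) (L := KLab) (branchPath (t + 1)) (c + 1) ψ 0
  rw [Nat.zero_add] at h₁ h₂
  rw [← h₁, ← h₂]
  refine satP_congr_of_satS_iff ψ (fun j φ hφ => ?_) 0
  rcases le_or_gt (j + c) t with hj | hj
  · rw [branchPath_of_le hj, branchPath_of_le (by omega)]
    exact hmain (j + c) (by omega) hj φ hφ
  · rw [branchPath_of_lt hj, branchPath_of_lt (by omega),
      show j + (c + 1) - (t + 1) - 1 = j + c - t - 1 by omega]
    exact satS_sideNode_iff (by omega) (by omega) φ _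

theorem satS_ex_mainNode_iff_succ {ψ : PForm Unit} {c : ℕ} (hc : c + nextDepthP ψ < m)
    (hmain : ∀ k ≤ nextDepthP ψ, ∀ φ, sizeS φ ≤ stateSizeP ψ →
      (SatS (Ttree m) KLab φ (mainNode (c + k)) ↔
        SatS (Ttree m) KLab φ (mainNode (c + k + 1)))) :
    SatS (Ttree m) KLab (.ex ψ) (mainNode c) ↔
      SatS (Ttree m) KLab (.ex ψ) (mainNode (c + 1)) := by
  have far : ∀ t, c + nextDepthP ψ < t →
      (SatP (Ttree m) KLab ψ (branchPath t) c ↔ SatP (Ttree m) KLab ψ (branchPath t) (c + 1)) :=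
    fun t ht => satP_iff_succ_of_satS_iff ψ c fun k hk φ hφ => by
      rw [branchPath_of_le (by omega), branchPath_of_le (by omega)]
      exact hmain k hk φ hφ
  have near : ∀ t, c ≤ t → t ≤ c + nextDepthP ψ →
      (SatP (Ttree m) KLab ψ (branchPath t) c ↔
        SatP (Ttree m) KLab ψ (branchPath (t + 1)) (c + 1)) :=
    fun t hct htc => satP_branchPath_iff_succ (by omega) fun j hcj hjt φ hφ => by
      simpa [Nat.add_sub_cancel' hcj] using hmain (j - c) (by omega) φ hφ
  rw [satS_ex_mainNode_iff, satS_ex_mainNode_iff, satP_iff_succ_of_satS_iff ψ c hmain]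
  refine or_congr_right ⟨?_, ?_⟩
  · rintro ⟨t, hct, ht, hs⟩
    by_cases htc : c + nextDepthP ψ < t
    · exact ⟨t, by omega, ht, (far t htc).1 hs⟩
    · exact ⟨t + 1, by omega, by omega, (near t hct (by omega)).1 hs⟩
  · rintro ⟨t, hct, ht, hs⟩
    by_cases htc : c + nextDepthP ψ < t
    · exact ⟨t, by omega, ht, (far t htc).2 hs⟩
    · obtain ⟨t, rfl⟩ := Nat.exists_eq_add_of_le' (show 1 ≤ t by omega)
      exact ⟨t, by omega, by omega, (near t (by omega) (by omega)).2 hs⟩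

theorem satS_mainNode_iff_succ : ∀ (φ : SForm Unit) {c : ℕ}, sizeS φ + c < m →
    (SatS (Ttree m) KLab φ (mainNode c) ↔ SatS (Ttree m) KLab φ (mainNode (c + 1)))
  | .top, _, _ => Iff.rfl
  | .atom _, c, _ => by simp [SatS, KLab_mainNode]
  | .not φ, c, h => not_congr (satS_mainNode_iff_succ φ (by simp only [sizeS] at h; omega))
  | .and φ χ, c, h => by
    simp only [sizeS] at h
    exact and_congr (satS_mainNode_iff_succ φ (by omega)) (satS_mainNode_iff_succ χ (by omega))
  | .cnt K φ, c, h => satS_cnt_congr K fun d => by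
    simp only [sizeS] at h
    rcases d with _ | _ | d
    · simp only [← mainNode_succ, mainNode_mem_Ttree, true_and]
      exact satS_mainNode_iff_succ φ (by omega)
    · rw [mainNode_append_mem_Ttree_iff, mainNode_append_mem_Ttree_iff]
      exact and_congr (by omega) (satS_sideNode_iff (by omega) (by omega) φ 0)
    · simp [mainNode_append_mem_Ttree_iff]
  | .ex ψ, c, h => by
    have hψ := stateSizeP_add_nextDepthP_le ψ
    simp only [sizeS] at h
    exact satS_ex_mainNode_iff_succ (by omega) fun k hk φ hφ =>
      satS_mainNode_iff_succ φ (by omega)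
termination_by φ => sizeS φ
decreasing_by all_goals simp only [sizeS] at *; omega

end Ttree

/-- Indistinguishability along the main path of `T_{n+1}`: for `n ≥ 1`,
`0 ≤ i ≤ n` and any CCTL* path formula `ψ` with `|ψ| ≤ n − i`, `ψ` holds at
position `i` of the main path of `T_{n+1}` iff it holds at position `i + 1`. -/
theorem stmt14 (n : ℕ) (hn : 1 ≤ n) (i : ℕ) (hi : i ≤ n)
    (ψ : PForm Unit) (hψ : sizeP ψ ≤ n - i) :
    SatP (Ttree (n + 1)) KLab ψ mainNode i ↔
    SatP (Ttree (n + 1)) KLab ψ mainNode (i + 1) := by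
  have hbudget := stateSizeP_add_nextDepthP_le ψ
  exact satP_iff_succ_of_satS_iff ψ i fun k hk φ hφ => satS_mainNode_iff_succ φ (by omega)
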